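/- The PEV-based Diffusion Mechanism is incentive compatible: for every agent i with true type θ_i and every report profile θ'_{−i} of the others, truthful reporting θ_i (true distribution, true cost, and inviting all neighbors) maximizes agent i's expected utility over all possible reports θ'_i = (f'_i, c'_i, r'_i) with r'_i ⊆ r_i, expectation taken over qualities drawn from true distributions. -/

import Mathlib

open Finset

/-- An agent's report: a distribution over qualities, a cost, and a set of invited neighbours. -/
structure Report (A : Type*) where
  f : ℝ → ℝ
  c : ℝ
  nbrs : Finset A

/-- Reported expected welfare  E_{f}[Q] - c. -/
def welfare {A : Type*} (Q : Finset ℝ) (r : Report A) : ℝ :=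
  (∑ q ∈ Q, q * r.f q) - r.c

/-- `f` is a probability mass function on the finite quality set `Q`. -/
def IsPMF (Q : Finset ℝ) (f : ℝ → ℝ) : Prop :=
  (∀ q ∈ Q, 0 ≤ f q) ∧ (∑ q ∈ Q, f q) = 1

/-- Edge of the reported (diffusion) graph, avoiding a removed set `R` of agents. -/
def edge {A : Type*} (θ : A → Report A) (R : Set A) (a b : A) : Prop :=
  a ∉ R ∧ b ∉ R ∧ b ∈ (θ a).nbrs

/-- `i` participates: it is reachable from the requester (whose neighbours are `rs`)
avoiding the removed agents `R`.  `participates rs θ {i} k` is membership in I((nil, θ_{-i})). -/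
def participates {A : Type*} (rs : Finset A) (θ : A → Report A) (R : Set A) (i : A) : Prop :=
  i ∉ R ∧ ∃ j ∈ rs, j ∉ R ∧ Relation.ReflTransGen (edge θ R) j i

/-- `l` is a simple path from (a neighbour of) the requester to `i` in the reported graph. -/
def pathTo {A : Type*} (rs : Finset A) (θ : A → Report A) (i : A) (l : List A) : Prop :=
  l.Nodup ∧ l.Chain' (edge θ ∅) ∧ (∃ a, l.head? = some a ∧ a ∈ rs) ∧ l.getLast? = some i

/-- `i` is a critical agent of `j`: `i` lies on every simple path from the requester to `j`. -/
def critical {A : Type*} (rs : Finset A) (θ : A → Report A) (i j : A) : Prop :=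
  ∀ l, pathTo rs θ j l → i ∈ l

/-- `v` is the maximum reported welfare among participants when `i` does not
participate (`0` if there are none). -/
def cmax {A : Type*} (Q : Finset ℝ) (rs : Finset A) (θ : A → Report A) (i : A) (v : ℝ) : Prop :=
  0 ≤ v ∧ (∀ k, participates rs θ {i} k → welfare Q (θ k) ≤ v) ∧
    (v = 0 ∨ ∃ k, participates rs θ {i} k ∧ v = welfare Q (θ k))

/-- An execution of the PEV-based Diffusion Mechanism on report profile `θ`:
`seq 0, …, seq (m-1)` is the critical-agent sequence (i_1, …, i_m) of the
reported-welfare-maximizing agent `j = seq (m-1)`, `w k` the counterfactual maxima,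
`t` the index of the selected agent, and `p q i` agent `i`'s payoff when the realized
quality is `q`. -/
structure PEVRun {A : Type*} (Q : Finset ℝ) (rs : Finset A) (θ : A → Report A) where
  m : ℕ
  hm : 0 < m
  seq : ℕ → A
  w : ℕ → ℝ
  t : ℕ
  ht : t < m
  p : ℝ → A → ℝ
  /-- `j = seq (m-1)` maximizes reported expected welfare among participants -/
  hj : participates rs θ ∅ (seq (m-1)) ∧
    ∀ k, participates rs θ ∅ k → welfare Q (θ k) ≤ welfare Q (θ (seq (m-1)))
  hinj : ∀ k < m, ∀ k' < m, seq k = seq k' → k = k'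
  /-- the sequence enumerates exactly the (participating) critical agents of `j` -/
  hcrit : ∀ i, (∃ k < m, seq k = i) ↔
    (critical rs θ i (seq (m-1)) ∧ participates rs θ ∅ i)
  /-- it is ordered by the criticality relation -/
  hord : ∀ k k', k < k' → k' < m → critical rs θ (seq k) (seq k')
  /-- `w k` is the maximum reported welfare among I((nil, θ_{-seq k})) -/
  hw : ∀ k < m, cmax Q rs θ (seq k) (w k)
  /-- the selected agent is the first in the sequence whose reported welfare equals
  the next counterfactual maximum (and `j` if there is none) -/
  hsel : (t + 1 < m → welfare Q (θ (seq t)) = w (t + 1)) ∧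
    ∀ k < t, welfare Q (θ (seq k)) ≠ w (k + 1)
  hpay1 : ∀ q, ∀ k < t, p q (seq k) = w (k + 1) - w k
  hpay2 : ∀ q, p q (seq t) = q - w t
  hpay3 : ∀ q, ∀ k, t < k → k < m → p q (seq k) = 0
  hpay4 : ∀ q i, (∀ k < m, seq k ≠ i) → p q i = 0


/-! ### Auxiliary lemmas -/

section AuxList
variable {A : Type*} [DecidableEq A]

omit [DecidableEq A] in
lemma mem_of_getLast?_eq {l : List A} {x : A} (h : l.getLast? = some x) : x ∈ l := by
  have hx : x ∈ l.getLast? := by rw [h]; rfl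
  obtain ⟨hne, rfl⟩ := List.mem_getLast?_eq_getLast hx
  exact List.getLast_mem hne

lemma exists_two_split {l : List A} (h : ¬ l.Nodup) :
    ∃ (v : A) (l₁ l₂ l₃ : List A), l = l₁ ++ v :: (l₂ ++ v :: l₃) := by
  rw [List.nodup_iff_count_le_one] at h
  push_neg at h
  obtain ⟨a, ha⟩ := h
  have ha2 : 2 ≤ l.count a := ha
  have hmem : a ∈ l := by
    rw [← List.count_pos_iff]
    omega
  obtain ⟨s, t, rfl⟩ := List.append_of_mem hmem
  rw [List.count_append, List.count_cons_self] at ha2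
  have : a ∈ s ∨ a ∈ t := by
    by_contra hcon
    push_neg at hcon
    rw [List.count_eq_zero_of_not_mem hcon.1, List.count_eq_zero_of_not_mem hcon.2] at ha2
    omega
  rcases this with hs | ht
  · obtain ⟨s₁, s₂, rfl⟩ := List.append_of_mem hs
    exact ⟨a, s₁, s₂, t, by simp⟩
  · obtain ⟨t₁, t₂, rfl⟩ := List.append_of_mem ht
    exact ⟨a, s, t₁, t₂, rfl⟩

lemma dedup_chain' {r : A → A → Prop} :
    ∀ (n : ℕ) (l : List A), l.length ≤ n → l.Chain' r → ∀ {a x : A},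
      l.head? = some a → l.getLast? = some x →
      ∃ l' : List A, l'.Nodup ∧ l'.Chain' r ∧ l'.head? = some a ∧ l'.getLast? = some x ∧
        ∀ b ∈ l', b ∈ l := by
  intro n
  induction n with
  | zero =>
    intro l hl _ a x hh _
    cases l with
    | nil => simp at hh
    | cons y t => simp at hl
  | succ n ih =>
    intro l hl hch a x hh hlast
    by_cases hnd : l.Nodup
    · exact ⟨l, hnd, hch, hh, hlast, fun b hb => hb⟩
    · obtain ⟨v, l₁, l₂, l₃, rfl⟩ := exists_two_split hnd
      set L := l₁ ++ v :: l₃ with hL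
      have hlen : L.length ≤ n := by
        simp only [hL, List.length_append, List.length_cons] at hl ⊢
        omega
      have hch' : L.Chain' r := by
        rw [List.Chain', List.isChain_append] at hch
        obtain ⟨h1, h2, h3⟩ := hch
        rw [hL, List.Chain', List.isChain_append]
        refine ⟨h1, ?_, ?_⟩
        · have : (v :: l₂ ++ v :: l₃).Chain' r := by
            simpa [List.Chain'] using h2
          have := this.right_of_append (l₁ := v :: l₂)
          exact this
        · intro p hp y hy
          apply h3 p hp
          simp at hy ⊢
          exact hy
      have hh' : L.head? = some a := by
        cases l₁ with
        | nil => simp [hL] at hh ⊢; simpa using hh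
        | cons z t => simp [hL] at hh ⊢; simpa using hh
      have hlast' : L.getLast? = some x := by
        cases l₃ with
        | nil =>
          have h1 : (l₁ ++ v :: (l₂ ++ [v])).getLast? = some v := by
            rw [show l₁ ++ v :: (l₂ ++ [v]) = (l₁ ++ v :: l₂) ++ [v] by simp]
            exact List.getLast?_concat
          rw [h1] at hlast
          simp only [hL]
          rw [List.getLast?_concat]
          exact hlast
        | cons z t =>
          have h1 : (l₁ ++ v :: (l₂ ++ v :: z :: t)).getLast? = (z :: t).getLast? := by
            rw [show l₁ ++ v :: (l₂ ++ v :: z :: t) = (l₁ ++ v :: l₂ ++ [v]) ++ (z :: t) by simp]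
            exact List.getLast?_append_of_ne_nil _ (by simp)
          have h2 : L.getLast? = (z :: t).getLast? := by
            rw [show L = (l₁ ++ [v]) ++ (z :: t) by simp [hL]]
            exact List.getLast?_append_of_ne_nil _ (by simp)
          rw [h1] at hlast
          rw [h2, hlast]
      obtain ⟨l', h1, h2, h3, h4, h5⟩ := ih L hlen hch' hh' hlast'
      exact ⟨l', h1, h2, h3, h4, fun b hb => by
        have := h5 b hb
        simp [hL] at this ⊢
        tauto⟩

omit [DecidableEq A] in
lemma chain'_imp_mem {r r' : A → A → Prop} :
    ∀ {l : List A}, l.Chain' r → (∀ a ∈ l, ∀ b ∈ l, r a b → r' a b) → l.Chain' r' := by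
  intro l
  induction l with
  | nil => intro _ _; simp [List.Chain']
  | cons a t ih =>
    intro h himp
    cases t with
    | nil => simp [List.Chain']
    | cons b t' =>
      rw [List.Chain', List.isChain_cons_cons] at h ⊢
      refine ⟨himp a (by simp) b (by simp) h.1, ih h.2 ?_⟩
      intro x hx y hy hr
      exact himp x (by simp [hx]) y (by simp [hy]) hr

end AuxList
section Lemmas
set_option linter.unusedSectionVars false
variable {A : Type*} [DecidableEq A] {rs : Finset A} {θ θ' : A → Report A} {R R' : Set A}
  {Q : Finset ℝ} {i g : A} {ρ : Report A}

lemma edge_mono (hR : R' ⊆ R) {a b : A} (h : edge θ R a b) : edge θ R' a b :=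
  ⟨fun hx => h.1 (hR hx), fun hx => h.2.1 (hR hx), h.2.2⟩

lemma participates_mono (hR : R' ⊆ R) {x : A} (h : participates rs θ R x) :
    participates rs θ R' x := by
  obtain ⟨hx, j, hj, hjR, hr⟩ := h
  exact ⟨fun hh => hx (hR hh), j, hj, fun hh => hjR (hR hh),
    Relation.ReflTransGen.mono (r := edge θ R) (p := edge θ R') (fun a b => edge_mono hR) _ _ hr⟩

/-- From participation extract a simple path avoiding `R`. -/
lemma exists_path {x : A} (h : participates rs θ R x) :
    ∃ l, pathTo rs θ x l ∧ ∀ a ∈ l, a ∉ R := by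
  obtain ⟨hx, j, hj, hjR, hr⟩ := h
  obtain ⟨l, hc, hlast⟩ := List.exists_isChain_cons_of_relationReflTransGen hr
  have hch : (j :: l).Chain' (edge θ R) := hc
  have hmemR : ∀ b ∈ j :: l, b ∉ R := by
    intro b hb
    rcases List.mem_cons.mp hb with rfl | hb
    · exact hjR
    · exact List.IsChain.induction (fun z => z ∉ R) (j :: l) hc
        (fun x y hxy _ => hxy.2.1) (fun _ => hjR) b (List.mem_cons_of_mem _ hb)
  have hch0 : (j :: l).Chain' (edge θ ∅) := hch.imp (fun a b => edge_mono (by simp))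
  have hlast' : (j :: l).getLast? = some x := by
    rw [List.getLast?_eq_getLast_of_ne_nil (List.cons_ne_nil _ _), hlast]
  obtain ⟨l', h1, h2, h3, h4, h5⟩ :=
    dedup_chain' (l := j :: l) (j :: l).length le_rfl hch0 (a := j) rfl hlast'
  exact ⟨l', ⟨h1, h2, ⟨j, h3, hj⟩, h4⟩, fun b hb => hmemR b (h5 b hb)⟩

/-- A simple path all whose vertices avoid `R` witnesses participation avoiding `R`. -/
lemma participates_of_path {x : A} {l : List A} (h : pathTo rs θ x l)
    (hR : ∀ a ∈ l, a ∉ R) : participates rs θ R x := by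
  obtain ⟨hnd, hch, ⟨a, hhead, hars⟩, hlast⟩ := h
  have hxl : x ∈ l := mem_of_getLast?_eq hlast
  cases l with
  | nil => simp at hhead
  | cons a' t =>
    have haa : a' = a := by simpa using hhead
    subst haa
    have hchR : (a' :: t).Chain' (edge θ R) := by
      refine chain'_imp_mem hch ?_
      intro p hp q hq hpq
      exact ⟨hR p hp, hR q hq, hpq.2.2⟩
    have hcR : List.Chain (edge θ R) a' t := hchR
    refine ⟨hR x hxl, a', hars, hR a' (by simp), ?_⟩
    refine List.relationReflTransGen_of_exists_isChain_cons t hcR ?_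
    have := List.getLast?_eq_getLast_of_ne_nil (l := a' :: t) (List.cons_ne_nil _ _)
    rw [this] at hlast
    simpa using hlast

lemma part_weaken {x : A} (h : participates rs θ R x) : participates rs θ ∅ x :=
  participates_mono (by simp) h

/-- Prefix of a path up to an element. -/
lemma path_prefix {x y : A} {l : List A} (h : pathTo rs θ x l) (hy : y ∈ l) :
    ∃ l', pathTo rs θ y l' ∧ (∀ a ∈ l', a ∈ l) ∧ (y ≠ x → x ∉ l') := by
  obtain ⟨hnd, hch, ⟨a, hhead, hars⟩, hlast⟩ := h
  obtain ⟨l₁, l₂, rfl⟩ := List.append_of_mem hy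
  have hpre : (l₁ ++ [y]) <+: (l₁ ++ y :: l₂) := ⟨l₂, by simp⟩
  refine ⟨l₁ ++ [y], ⟨hnd.sublist hpre.sublist, hch.prefix hpre, ⟨a, ?_, hars⟩,
    List.getLast?_concat⟩, ?_, ?_⟩
  · cases l₁ with
    | nil => simpa using hhead
    | cons z t => simpa using hhead
  · intro b hb; simp at hb ⊢; tauto
  · intro hne hxl
    cases l₂ with
    | nil =>
      rw [List.getLast?_concat] at hlast
      exact hne (by simpa using hlast)
    | cons z t =>
      have hx2 : x ∈ z :: t := by
        have : (l₁ ++ y :: z :: t).getLast? = (z :: t).getLast? := by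
          rw [show l₁ ++ y :: z :: t = (l₁ ++ [y]) ++ (z :: t) by simp]
          exact List.getLast?_append_of_ne_nil _ (by simp)
        rw [this] at hlast
        exact mem_of_getLast?_eq hlast
      have hnd' : ((l₁ ++ [y]) ++ (z :: t)).Nodup := by
        simpa using hnd
      rw [List.nodup_append] at hnd'
      exact hnd'.2.2 x hxl x hx2 rfl

lemma not_critical_iff {c x : A} :
    ¬ critical rs θ c x ↔ ∃ l, pathTo rs θ x l ∧ c ∉ l := by
  unfold critical
  push_neg
  rfl

lemma critical_trans {c b x : A} (hcb : critical rs θ c b) (hbx : critical rs θ b x) :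
    critical rs θ c x := by
  intro l hl
  obtain ⟨l', hl', hsub, -⟩ := path_prefix hl (hbx l hl)
  exact hsub c (hcb l' hl')

lemma critical_self {x : A} : critical rs θ x x := fun l hl => mem_of_getLast?_eq hl.2.2.2

/-- no mutual criticality between distinct participating agents -/
lemma not_critical_cycle {c x : A} (hcx : critical rs θ c x) (hxc : critical rs θ x c)
    (hne : c ≠ x) (hp : participates rs θ ∅ x) : False := by
  obtain ⟨l, hl, -⟩ := exists_path hp
  obtain ⟨l', hl', -, hxout⟩ := path_prefix hl (hcx l hl)
  exact hxout hne (hxc l' hl')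

/-- if `i` is critical for `e` then `i` is reachable avoiding `e` -/
lemma participates_avoid {i e : A} (hie : critical rs θ i e) (hne : e ≠ i)
    (hp : participates rs θ ∅ i) : participates rs θ {e} i := by
  obtain ⟨l, hl, -⟩ := exists_path hp
  by_cases he : e ∈ l
  · obtain ⟨l', hl', -, hxout⟩ := path_prefix hl he
    exact absurd (hie l' hl') (hxout hne)
  · exact participates_of_path hl (by intro a ha hac; exact he (by simpa using hac ▸ ha))

/-- removing a later critical agent keeps more agents -/
lemma avoid_subset {a b x : A} (hab : critical rs θ a b) (h : participates rs θ {a} x) :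
    participates rs θ {b} x := by
  obtain ⟨l, hl, havoid⟩ := exists_path h
  by_cases hb : b ∈ l
  · obtain ⟨l', hl', hsub, -⟩ := path_prefix hl hb
    exact absurd (havoid a (hsub a (hab l' hl'))) (by simp)
  · exact participates_of_path hl (by intro p hp hpc; exact hb (by simpa using hpc ▸ hp))

-- ============ update lemmas ============

lemma edge_update_le (hρ : ρ.nbrs ⊆ (θ i).nbrs) {a b : A}
    (h : edge (Function.update θ i ρ) R a b) : edge θ R a b := by
  refine ⟨h.1, h.2.1, ?_⟩
  by_cases hai : a = i
  · subst hai
    have := h.2.2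
    rw [Function.update_self] at this
    exact hρ this
  · have := h.2.2
    rwa [Function.update_of_ne hai] at this

lemma pathTo_update_le (hρ : ρ.nbrs ⊆ (θ i).nbrs) {x : A} {l : List A}
    (h : pathTo rs (Function.update θ i ρ) x l) : pathTo rs θ x l :=
  ⟨h.1, h.2.1.imp (fun _ _ => edge_update_le hρ), h.2.2⟩

lemma participates_update_le (hρ : ρ.nbrs ⊆ (θ i).nbrs) {x : A}
    (h : participates rs (Function.update θ i ρ) R x) : participates rs θ R x := by
  obtain ⟨hx, j, hj, hjR, hr⟩ := h
  exact ⟨hx, j, hj, hjR, Relation.ReflTransGen.mono (r := edge (Function.update θ i ρ) R) (p := edge θ R) (fun a b => edge_update_le hρ) _ _ hr⟩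

lemma critical_update_le (hρ : ρ.nbrs ⊆ (θ i).nbrs) {c x : A}
    (h : critical rs θ c x) : critical rs (Function.update θ i ρ) c x :=
  fun l hl => h l (pathTo_update_le hρ hl)

lemma edge_update_avoid (hiR : i ∈ R) {a b : A} :
    edge (Function.update θ i ρ) R a b ↔ edge θ R a b := by
  constructor <;> intro h <;> refine ⟨h.1, h.2.1, ?_⟩
  · have hai : a ≠ i := fun hh => h.1 (hh ▸ hiR)
    have := h.2.2
    rwa [Function.update_of_ne hai] at this
  · have hai : a ≠ i := fun hh => h.1 (hh ▸ hiR)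
    rw [Function.update_of_ne hai]
    exact h.2.2

lemma participates_update_avoid (hiR : i ∈ R) {x : A} :
    participates rs (Function.update θ i ρ) R x ↔ participates rs θ R x := by
  constructor
  · rintro ⟨hx, j, hj, hjR, hr⟩
    exact ⟨hx, j, hj, hjR, Relation.ReflTransGen.mono (r := edge (Function.update θ i ρ) R) (p := edge θ R) (fun a b h => (edge_update_avoid hiR).mp h) _ _ hr⟩
  · rintro ⟨hx, j, hj, hjR, hr⟩
    exact ⟨hx, j, hj, hjR, Relation.ReflTransGen.mono (r := edge θ R) (p := edge (Function.update θ i ρ) R) (fun a b h => (edge_update_avoid hiR).mpr h) _ _ hr⟩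

lemma welfare_update {k : A} (hk : k ≠ i) :
    welfare Q (Function.update θ i ρ k) = welfare Q (θ k) := by
  rw [Function.update_of_ne hk]

lemma part_ne_of_avoid {x : A} (h : participates rs θ {i} x) : x ≠ i := by
  intro hh; exact h.1 (by simp [hh])

lemma cmax_update_i {v : ℝ} :
    cmax Q rs (Function.update θ i ρ) i v ↔ cmax Q rs θ i v := by
  unfold cmax
  constructor
  · rintro ⟨h0, h1, h2⟩
    refine ⟨h0, ?_, ?_⟩
    · intro k hk
      have := h1 k ((participates_update_avoid (by simp)).mpr hk)
      rwa [welfare_update (part_ne_of_avoid hk)] at this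
    · rcases h2 with h | ⟨k, hk, hv⟩
      · exact Or.inl h
      · refine Or.inr ⟨k, (participates_update_avoid (by simp)).mp hk, ?_⟩
        rwa [welfare_update (part_ne_of_avoid hk)] at hv
  · rintro ⟨h0, h1, h2⟩
    refine ⟨h0, ?_, ?_⟩
    · intro k hk
      have hk' := (participates_update_avoid (by simp)).mp hk
      rw [welfare_update (part_ne_of_avoid hk')]
      exact h1 k hk'
    · rcases h2 with h | ⟨k, hk, hv⟩
      · exact Or.inl h
      · refine Or.inr ⟨k, (participates_update_avoid (by simp)).mpr hk, ?_⟩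
        rwa [welfare_update (part_ne_of_avoid hk)]

lemma cmax_unique {v v' : ℝ} (h : cmax Q rs θ i v) (h' : cmax Q rs θ i v') : v = v' := by
  obtain ⟨h0, h1, h2⟩ := h
  obtain ⟨h0', h1', h2'⟩ := h'
  apply le_antisymm
  · rcases h2 with rfl | ⟨k, hk, rfl⟩
    · exact h0'
    · exact h1' k hk
  · rcases h2' with rfl | ⟨k, hk, rfl⟩
    · exact h0
    · exact h1 k hk

/-- a chain avoiding `i` survives updating `i`'s report. -/
lemma chain'_update_of_not_mem {l : List A} (h : l.Chain' (edge θ ∅)) (hi : i ∉ l) :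
    l.Chain' (edge (Function.update θ i ρ) ∅) := by
  refine chain'_imp_mem h ?_
  intro a ha b hb hab
  have hai : a ≠ i := fun hh => hi (hh ▸ ha)
  exact ⟨by simp, by simp, by rw [Function.update_of_ne hai]; exact hab.2.2⟩

/-- a simple path ending at `i` survives updating `i`'s report. -/
lemma chain'_update_of_last :
    ∀ {l : List A}, l.Chain' (edge θ ∅) → l.Nodup → l.getLast? = some i →
      l.Chain' (edge (Function.update θ i ρ) ∅) := by
  intro l
  induction l with
  | nil => intro h _ _; simp [List.Chain']
  | cons a t ih =>
    intro hch hnd hlast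
    cases t with
    | nil => simp [List.Chain']
    | cons b t' =>
      rw [List.Chain', List.isChain_cons_cons] at hch ⊢
      have hilast : i ∈ b :: t' := by
        rw [show (a :: b :: t').getLast? = (b :: t').getLast? from rfl] at hlast
        exact mem_of_getLast?_eq hlast
      have hai : a ≠ i := by
        intro hh
        exact (List.nodup_cons.mp hnd).1 (hh ▸ hilast)
      refine ⟨⟨by simp, by simp, ?_⟩, ?_⟩
      · rw [Function.update_of_ne hai]; exact hch.1.2.2
      · exact ih hch.2 (List.nodup_cons.mp hnd).2
          (by rw [show (a :: b :: t').getLast? = (b :: t').getLast? from rfl] at hlast; exact hlast)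

lemma pathTo_update_self {l : List A} (h : pathTo rs θ i l) :
    pathTo rs (Function.update θ i ρ) i l :=
  ⟨h.1, chain'_update_of_last h.2.1 h.1 h.2.2.2, h.2.2.1, h.2.2.2⟩

lemma critical_to_i_update (hρ : ρ.nbrs ⊆ (θ i).nbrs) {c : A} :
    critical rs (Function.update θ i ρ) c i ↔ critical rs θ c i := by
  constructor
  · intro h l hl
    exact h l (pathTo_update_self hl)
  · intro h l hl
    exact h l (pathTo_update_le hρ hl)

/-- participation avoiding `g` transfers to the updated profile when `g` is critical for `i`. -/
lemma participates_update_of_crit (hgi : critical rs θ g i) {x : A}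
    (h : participates rs θ {g} x) : participates rs (Function.update θ i ρ) {g} x := by
  obtain ⟨l, hl, havoid⟩ := exists_path h
  have hil : i ∉ l := by
    intro hi
    obtain ⟨l', hl', hsub, -⟩ := path_prefix hl hi
    exact havoid g (hsub g (hgi l' hl')) rfl
  refine participates_of_path ⟨hl.1, chain'_update_of_not_mem hl.2.1 hil, hl.2.2.1, hl.2.2.2⟩ havoid

lemma not_part_avoid_self_of_crit (hgi : critical rs θ g i) :
    ¬ participates rs θ {g} i := by
  intro h
  obtain ⟨l, hl, havoid⟩ := exists_path h
  exact havoid g (hgi l hl) rfl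

lemma cmax_update_of_crit (hρ : ρ.nbrs ⊆ (θ i).nbrs) {g : A} (hgi : critical rs θ g i) {v : ℝ} :
    cmax Q rs (Function.update θ i ρ) g v ↔ cmax Q rs θ g v := by
  have hgi' : critical rs (Function.update θ i ρ) g i := critical_update_le hρ hgi
  have hne : ∀ x, participates rs θ {g} x → x ≠ i := by
    exact fun x hx h => not_part_avoid_self_of_crit hgi (h ▸ hx)
  have hne' : ∀ x, participates rs (Function.update θ i ρ) {g} x → x ≠ i := by
    exact fun x hx h => not_part_avoid_self_of_crit hgi' (h ▸ hx)
  unfold cmax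
  constructor
  · rintro ⟨h0, h1, h2⟩
    refine ⟨h0, ?_, ?_⟩
    · intro k hk
      have := h1 k (participates_update_of_crit hgi hk)
      rwa [welfare_update (hne k hk)] at this
    · rcases h2 with h | ⟨k, hk, hv⟩
      · exact Or.inl h
      · refine Or.inr ⟨k, participates_update_le hρ hk, ?_⟩
        rwa [welfare_update (hne' k hk)] at hv
  · rintro ⟨h0, h1, h2⟩
    refine ⟨h0, ?_, ?_⟩
    · intro k hk
      have hk' := participates_update_le hρ hk
      rw [welfare_update (hne k hk')]
      exact h1 k hk'
    · rcases h2 with h | ⟨k, hk, hv⟩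
      · exact Or.inl h
      · refine Or.inr ⟨k, participates_update_of_crit hgi hk, ?_⟩
        rwa [welfare_update (hne k hk)]

end Lemmas


section AuxRun
set_option linter.unusedSectionVars false
variable {A : Type*} [DecidableEq A] {Q : Finset ℝ} {rs : Finset A} {θ θc : A → Report A}
  {i : A} {ρ : Report A}

lemma sum_pmf_mul {f : ℝ → ℝ} (h1 : ∑ q ∈ Q, f q = 1) (C : ℝ) :
    ∑ q ∈ Q, f q * C = C := by rw [← Finset.sum_mul, h1, one_mul]

lemma util_of_not_mem (run : PEVRun Q rs θc) (g : Report A) (hpmf : IsPMF Q g.f)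
    (hno : ∀ k < run.m, run.seq k ≠ i) :
    ∑ q ∈ Q, g.f q * (run.p q i - (if run.seq run.t = i then g.c else 0)) = 0 := by
  rw [if_neg (hno run.t run.ht)]
  refine Finset.sum_eq_zero (fun q hq => ?_)
  rw [run.hpay4 q i hno]
  ring

lemma util_of_mid (run : PEVRun Q rs θc) (g : Report A) (hpmf : IsPMF Q g.f)
    {k : ℕ} (hk : k < run.t) (hkm : k < run.m) (hseq : run.seq k = i) :
    ∑ q ∈ Q, g.f q * (run.p q i - (if run.seq run.t = i then g.c else 0)) =
      run.w (k+1) - run.w k := by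
  have hne : run.seq run.t ≠ i := by
    intro h
    have := run.hinj run.t run.ht k hkm (h.trans hseq.symm)
    omega
  rw [if_neg hne]
  have hpay := run.hpay1
  calc ∑ q ∈ Q, g.f q * (run.p q i - 0)
      = ∑ q ∈ Q, g.f q * (run.w (k+1) - run.w k) := by
        refine Finset.sum_congr rfl (fun q hq => ?_)
        rw [← hseq, run.hpay1 q k hk]
        ring
    _ = run.w (k+1) - run.w k := sum_pmf_mul hpmf.2 _

lemma util_of_late (run : PEVRun Q rs θc) (g : Report A) (hpmf : IsPMF Q g.f)
    {k : ℕ} (hk : run.t < k) (hkm : k < run.m) (hseq : run.seq k = i) :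
    ∑ q ∈ Q, g.f q * (run.p q i - (if run.seq run.t = i then g.c else 0)) = 0 := by
  have hne : run.seq run.t ≠ i := by
    intro h
    have := run.hinj run.t run.ht k hkm (h.trans hseq.symm)
    omega
  rw [if_neg hne]
  refine Finset.sum_eq_zero (fun q hq => ?_)
  rw [← hseq, run.hpay3 q k hk hkm]
  ring

lemma util_of_sel (run : PEVRun Q rs θc) (g : Report A) (hpmf : IsPMF Q g.f)
    (hseq : run.seq run.t = i) :
    ∑ q ∈ Q, g.f q * (run.p q i - (if run.seq run.t = i then g.c else 0)) =
      welfare Q g - run.w run.t := by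
  rw [if_pos hseq]
  calc ∑ q ∈ Q, g.f q * (run.p q i - g.c)
      = ∑ q ∈ Q, (q * g.f q - g.f q * (run.w run.t + g.c)) := by
        refine Finset.sum_congr rfl (fun q hq => ?_)
        rw [← hseq, run.hpay2 q]
        ring
    _ = (∑ q ∈ Q, q * g.f q) - ∑ q ∈ Q, g.f q * (run.w run.t + g.c) := by
        rw [Finset.sum_sub_distrib]
    _ = welfare Q g - run.w run.t := by
        rw [sum_pmf_mul hpmf.2, welfare]
        ring

/-- The initial segments (up to `i`) of the critical sequences of two runs that differ
only in `i`'s report agree. -/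
lemma prefix_eq (hρ : ρ.nbrs ⊆ (θ i).nbrs)
    (R : PEVRun Q rs θ) (R' : PEVRun Q rs (Function.update θ i ρ))
    {k k' : ℕ} (hk : k < R.m) (hsk : R.seq k = i) (hk' : k' < R'.m) (hsk' : R'.seq k' = i) :
    k' = k ∧ ∀ j ≤ k, R.seq j = R'.seq j := by
  have hipart' : participates rs (Function.update θ i ρ) ∅ i := ((R'.hcrit i).mp ⟨k', hk', hsk'⟩).2
  have hipart : participates rs θ ∅ i := participates_update_le hρ hipart'
  -- membership facts
  have SK : ∀ j ≤ k, critical rs θ (R.seq j) i ∧ participates rs θ ∅ (R.seq j) := by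
    intro j hj
    constructor
    · rcases eq_or_lt_of_le hj with h | h
      · rw [h, hsk]; exact critical_self
      · have := R.hord j k h hk; rwa [hsk] at this
    · exact ((R.hcrit (R.seq j)).mp ⟨j, lt_of_le_of_lt hj hk, rfl⟩).2
  have SK' : ∀ j ≤ k', critical rs (Function.update θ i ρ) (R'.seq j) i ∧ participates rs (Function.update θ i ρ) ∅ (R'.seq j) := by
    intro j hj
    constructor
    · rcases eq_or_lt_of_le hj with h | h
      · rw [h, hsk']; exact critical_self
      · have := R'.hord j k' h hk'; rwa [hsk'] at this
    · exact ((R'.hcrit (R'.seq j)).mp ⟨j, lt_of_le_of_lt hj hk', rfl⟩).2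
  -- set transfer
  have F3 : ∀ c, critical rs θ c i → participates rs θ ∅ c →
      critical rs (Function.update θ i ρ) c i ∧ participates rs (Function.update θ i ρ) ∅ c := by
    intro c hc hp
    have hc' : critical rs (Function.update θ i ρ) c i := (critical_to_i_update hρ).mpr hc
    refine ⟨hc', ?_⟩
    obtain ⟨li, hli, -⟩ := exists_path hipart'
    obtain ⟨l', hl', -, -⟩ := path_prefix hli (hc' li hli)
    exact participates_of_path hl' (by simp)
  have F3' : ∀ c, critical rs (Function.update θ i ρ) c i → participates rs (Function.update θ i ρ) ∅ c →
      critical rs θ c i ∧ participates rs θ ∅ c := by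
    intro c hc hp
    exact ⟨(critical_to_i_update hρ).mp hc, participates_update_le hρ hp⟩
  -- criticality for i implies membership in the sequence, within the prefix
  have F2 : ∀ c, critical rs θ c i → participates rs θ ∅ c → ∃ j ≤ k, R.seq j = c := by
    intro c hc hp
    have hcj : critical rs θ c (R.seq (R.m - 1)) :=
      critical_trans hc ((R.hcrit i).mp ⟨k, hk, hsk⟩).1
    obtain ⟨j, hjm, hjc⟩ := (R.hcrit c).mpr ⟨hcj, hp⟩
    refine ⟨j, ?_, hjc⟩
    by_contra hcon
    push_neg at hcon
    have hic : critical rs θ i c := by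
      have := R.hord k j hcon hjm; rwa [hsk, hjc] at this
    have hcne : i ≠ c := by
      intro h
      have := R.hinj j hjm k hk (by rw [hjc, ← h, hsk])
      omega
    exact not_critical_cycle hic hc hcne hp
  have F2' : ∀ c, critical rs (Function.update θ i ρ) c i → participates rs (Function.update θ i ρ) ∅ c → ∃ j ≤ k', R'.seq j = c := by
    intro c hc hp
    have hcj : critical rs (Function.update θ i ρ) c (R'.seq (R'.m - 1)) :=
      critical_trans hc ((R'.hcrit i).mp ⟨k', hk', hsk'⟩).1
    obtain ⟨j, hjm, hjc⟩ := (R'.hcrit c).mpr ⟨hcj, hp⟩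
    refine ⟨j, ?_, hjc⟩
    by_contra hcon
    push_neg at hcon
    have hic : critical rs (Function.update θ i ρ) i c := by
      have := R'.hord k' j hcon hjm; rwa [hsk', hjc] at this
    have hcne : i ≠ c := by
      intro h
      have := R'.hinj j hjm k' hk' (by rw [hjc, ← h, hsk'])
      omega
    exact not_critical_cycle hic hc hcne hp
  have hmutual : ∀ c c', critical rs (Function.update θ i ρ) c' c → critical rs θ c c' → c' ≠ c →
      participates rs (Function.update θ i ρ) ∅ c → False := by
    intro c c' h1 h2 hne hp
    obtain ⟨lc, hlc, -⟩ := exists_path hp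
    obtain ⟨l'', hl'', -, hout⟩ := path_prefix (pathTo_update_le hρ hlc) (h1 lc hlc)
    exact hout hne (h2 l'' hl'')
  have main : ∀ j, j ≤ k → j ≤ k' → R.seq j = R'.seq j := by
    intro j
    induction j using Nat.strong_induction_on with
    | _ j IH =>
      intro hjk hjk'
      by_contra hne
      obtain ⟨hSc1, hSc2⟩ := SK j hjk
      obtain ⟨hSc'1, hSc'2⟩ := SK' j hjk'
      obtain ⟨b, hbk', hbc⟩ := F2' (R.seq j) (F3 _ hSc1 hSc2).1 (F3 _ hSc1 hSc2).2
      rcases lt_trichotomy b j with h1 | h1 | h1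
      · have hIH := IH b h1 (le_trans (le_of_lt h1) hjk) (le_trans (le_of_lt h1) hjk')
        have : R.seq b = R.seq j := by rw [hIH, hbc]
        have := R.hinj b (lt_of_le_of_lt (le_trans (le_of_lt h1) hjk) hk) j
          (lt_of_le_of_lt hjk hk) this
        omega
      · exact hne (by rw [← hbc, h1])
      · have hcc' : critical rs (Function.update θ i ρ) (R'.seq j) (R.seq j) := by
          have := R'.hord j b h1 (lt_of_le_of_lt hbk' hk')
          rwa [hbc] at this
        obtain ⟨b₂, hb₂k, hb₂c⟩ := F2 (R'.seq j) (F3' _ hSc'1 hSc'2).1 (F3' _ hSc'1 hSc'2).2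
        rcases lt_trichotomy b₂ j with h2 | h2 | h2
        · have hIH := IH b₂ h2 (le_trans (le_of_lt h2) hjk) (le_trans (le_of_lt h2) hjk')
          have : R'.seq b₂ = R'.seq j := by rw [← hIH, hb₂c]
          have := R'.hinj b₂ (lt_of_le_of_lt (le_trans (le_of_lt h2) hjk') hk') j
            (lt_of_le_of_lt hjk' hk') this
          omega
        · exact hne (by rw [← hb₂c, h2])
        · have hc'c : critical rs θ (R.seq j) (R'.seq j) := by
            have := R.hord j b₂ h2 (lt_of_le_of_lt hb₂k hk)
            rwa [hb₂c] at this
          exact hmutual (R.seq j) (R'.seq j) hcc' hc'c (fun h => hne h.symm) (F3 _ hSc1 hSc2).2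
  have hkk : k' = k := by
    rcases lt_trichotomy k' k with h | h | h
    · have hm := main k' (le_of_lt h) le_rfl
      have h2 : R.seq k' = R.seq k := by rw [hm, hsk', hsk]
      have := R.hinj k' (lt_trans h hk) k hk h2
      omega
    · exact h
    · have := main k le_rfl (le_of_lt h)
      have h2 : R'.seq k = R'.seq k' := by rw [← this, hsk, hsk']
      have := R'.hinj k (lt_trans h hk') k' hk' h2
      omega
  exact ⟨hkk, fun j hj => main j hj (hkk ▸ hj)⟩

end AuxRun

section AuxMore
set_option linter.unusedSectionVars false
variable {A : Type*} [DecidableEq A] {Q : Finset ℝ} {rs : Finset A} {θ : A → Report A}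
  {i : A} {ρ : Report A}

lemma avoid_singleton {l : List A} {e : A} (h : e ∉ l) : ∀ a ∈ l, a ∉ ({e} : Set A) := by
  intro a ha hac
  rw [Set.mem_singleton_iff] at hac
  subst hac
  exact h ha

/-- If truthfully the task is assigned strictly before `i`'s position, the same happens
under any misreport of `i`. -/
lemma no_late (hρ : ρ.nbrs ⊆ (θ i).nbrs)
    (R : PEVRun Q rs θ) (R' : PEVRun Q rs (Function.update θ i ρ))
    {k k' : ℕ} (hk : k < R.m) (hsk : R.seq k = i) (hk' : k' < R'.m) (hsk' : R'.seq k' = i)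
    (htk : R.t < k) : R'.t < k' := by
  obtain ⟨hkk, hpre⟩ := prefix_eq hρ R R' hk hsk hk' hsk'
  subst hkk
  by_contra hcon
  push_neg at hcon
  have ht' : R.t < R'.t := lt_of_lt_of_le htk hcon
  apply R'.hsel.2 R.t ht'
  have hseq : R'.seq R.t = R.seq R.t := (hpre R.t (le_of_lt htk)).symm
  have hsne : R.seq R.t ≠ i := by
    intro h
    have := R.hinj R.t (lt_trans htk hk) k' hk (h.trans hsk.symm)
    omega
  have h1 : welfare Q (Function.update θ i ρ (R'.seq R.t)) = welfare Q (θ (R.seq R.t)) := by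
    rw [hseq]; exact welfare_update hsne
  have h2 : welfare Q (θ (R.seq R.t)) = R.w (R.t+1) := R.hsel.1 (by omega)
  have hw' := R'.hw (R.t+1) (by omega)
  have hseq1 : R'.seq (R.t+1) = R.seq (R.t+1) := (hpre (R.t+1) (by omega)).symm
  rw [hseq1] at hw'
  have hww : R'.w (R.t+1) = R.w (R.t+1) := by
    rcases eq_or_lt_of_le (show R.t+1 ≤ k' by omega) with he | hlt
    · have hei : R.seq (R.t+1) = i := by rw [← he] at hsk; exact hsk
      rw [hei] at hw'
      have hwθ := R.hw (R.t+1) (by omega)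
      rw [hei] at hwθ
      exact cmax_unique (cmax_update_i.mp hw') hwθ
    · have hgi : critical rs θ (R.seq (R.t+1)) i := by
        have := R.hord (R.t+1) k' hlt hk
        rwa [hsk] at this
      exact cmax_unique ((cmax_update_of_crit hρ hgi).mp hw') (R.hw (R.t+1) (by omega))
  rw [h1, h2, hww]

end AuxMore
/-- Incentive compatibility of the PEV-based Diffusion Mechanism: for every agent `i`
whose true type is `θ i` and for any fixed reports of the others, no misreport
`ρ = (f'_i, c'_i, r'_i)` with `r'_i ⊆ r_i` yields a larger expected utility than
truthful reporting (expectation over `i`'s realized quality drawn from her true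
distribution). -/
theorem stmt_8 {A : Type*} [DecidableEq A] (Q : Finset ℝ) (hQ : ∀ q ∈ Q, 0 ≤ q)
    (rs : Finset A) (θ : A → Report A) (i : A)
    (hpmf : IsPMF Q (θ i).f) (hc : 0 ≤ (θ i).c)
    (hex : ∃ k, participates rs θ ∅ k ∧ 0 ≤ welfare Q (θ k))
    (ρ : Report A) (hρ : ρ.nbrs ⊆ (θ i).nbrs)
    (R : PEVRun Q rs θ) (R' : PEVRun Q rs (Function.update θ i ρ)) :
    (∑ q ∈ Q, (θ i).f q * (R'.p q i - (if R'.seq R'.t = i then (θ i).c else 0))) ≤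
    (∑ q ∈ Q, (θ i).f q * (R.p q i - (if R.seq R.t = i then (θ i).c else 0))) := by
  have hmono : ∀ k, k + 1 < R.m → R.w k ≤ R.w (k+1) := by
    intro k hk1
    have hcr : critical rs θ (R.seq k) (R.seq (k+1)) := R.hord k (k+1) (by omega) hk1
    have h2 := R.hw (k+1) hk1
    rcases (R.hw k (by omega)).2.2 with h | ⟨z, hz, hv⟩
    · rw [h]; exact h2.1
    · rw [hv]; exact h2.2.1 z (avoid_subset hcr hz)
  have hjmax_le : ∀ v, cmax Q rs θ i v → (∀ kk, kk < R.m → R.seq kk ≠ i) →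
      participates rs θ ∅ i → welfare Q (θ (R.seq (R.m-1))) ≤ v := by
    intro v hv hno hip
    have hncrit : ¬ critical rs θ i (R.seq (R.m-1)) := by
      intro hcr
      obtain ⟨kk, hkkm, hkki⟩ := (R.hcrit i).mpr ⟨hcr, hip⟩
      exact hno kk hkkm hkki
    obtain ⟨l, hl, hil⟩ := not_critical_iff.mp hncrit
    exact hv.2.1 _ (participates_of_path hl (avoid_singleton hil))
  have hsel_ge : R.seq R.t = i → R.w R.t ≤ welfare Q (θ i) := by
    intro hti
    by_cases h1 : R.t + 1 < R.m
    · have hV : welfare Q (θ i) = R.w (R.t+1) := by rw [← hti]; exact R.hsel.1 h1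
      rw [hV]; exact hmono R.t h1
    · have hwt := R.hw R.t R.ht
      rw [hti] at hwt
      have hmt : R.m - 1 = R.t := by have := R.ht; omega
      rcases hwt.2.2 with h | ⟨z, hz, hv⟩
      · rw [h]
        obtain ⟨z, hz, hz0⟩ := hex
        calc (0:ℝ) ≤ welfare Q (θ z) := hz0
        _ ≤ welfare Q (θ (R.seq (R.m-1))) := R.hj.2 z hz
        _ = welfare Q (θ i) := by rw [hmt, hti]
      · rw [hv]
        calc welfare Q (θ z) ≤ welfare Q (θ (R.seq (R.m-1))) := R.hj.2 z (part_weaken hz)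
        _ = welfare Q (θ i) := by rw [hmt, hti]
  have hRHS0 : 0 ≤ ∑ q ∈ Q, (θ i).f q * (R.p q i - (if R.seq R.t = i then (θ i).c else 0)) := by
    by_cases hiseq : ∃ kk, kk < R.m ∧ R.seq kk = i
    · obtain ⟨kk, hkkm, hkki⟩ := hiseq
      rcases lt_trichotomy kk R.t with h | h | h
      · rw [util_of_mid R (θ i) hpmf h hkkm hkki]
        have hlt : kk + 1 < R.m := by have := R.ht; omega
        linarith [hmono kk hlt]
      · rw [util_of_sel R (θ i) hpmf (h ▸ hkki)]
        linarith [hsel_ge (h ▸ hkki)]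
      · rw [util_of_late R (θ i) hpmf h hkkm hkki]
    · push_neg at hiseq
      rw [util_of_not_mem R (θ i) hpmf hiseq]
  by_cases hA : ∃ k', k' < R'.m ∧ R'.seq k' = i
  swap
  · push_neg at hA
    rw [util_of_not_mem R' (θ i) hpmf hA]
    exact hRHS0
  obtain ⟨k', hk'm, hk'i⟩ := hA
  have hipart' : participates rs (Function.update θ i ρ) ∅ i :=
    ((R'.hcrit i).mp ⟨k', hk'm, hk'i⟩).2
  have hipart : participates rs θ ∅ i := participates_update_le hρ hipart'
  rcases lt_trichotomy k' R'.t with hcase | hcase | hcase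
  · -- (c) : i is an intermediate paid critical agent under the misreport
    rw [util_of_mid R' (θ i) hpmf hcase hk'm hk'i]
    have hk1m : k' + 1 < R'.m := by have := R'.ht; omega
    have hwk' : cmax Q rs θ i (R'.w k') := by
      have := R'.hw k' hk'm
      rw [hk'i] at this
      exact cmax_update_i.mp this
    have hw1 := R'.hw (k'+1) hk1m
    rcases hw1.2.2 with hzero | ⟨p, hp, hpv⟩
    · rw [hzero]
      linarith [hRHS0, hwk'.1]
    · have hpne : p ≠ i := by
        intro h
        subst h
        have hne2 := R'.hsel.2 k' hcase
        rw [hk'i] at hne2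
        exact hne2 hpv.symm
      have hwelp : welfare Q (Function.update θ i ρ p) = welfare Q (θ p) := welfare_update hpne
      have hppart' : participates rs (Function.update θ i ρ) ∅ p := part_weaken hp
      have hppart : participates rs θ ∅ p := participates_update_le hρ hppart'
      rw [hpv, hwelp]
      by_cases hiseq : ∃ kk, kk < R.m ∧ R.seq kk = i
      · obtain ⟨kk, hkkm, hkki⟩ := hiseq
        have hbound : kk + 1 < R.m → welfare Q (θ p) ≤ R.w (kk+1) := by
          intro hkk1
          have he_crit : critical rs θ i (R.seq (kk+1)) := by
            have := R.hord kk (kk+1) (by omega) hkk1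
            rwa [hkki] at this
          have he_ne : R.seq (kk+1) ≠ i := by
            intro h2
            have := R.hinj (kk+1) hkk1 kk hkkm (h2.trans hkki.symm)
            omega
          by_cases hpe : participates rs θ {R.seq (kk+1)} p
          · exact (R.hw (kk+1) hkk1).2.1 p hpe
          · obtain ⟨l, hl, hld⟩ := exists_path hp
            have hlθ : pathTo rs θ p l := pathTo_update_le hρ hl
            have hel : R.seq (kk+1) ∈ l := by
              by_contra hnel
              exact hpe (participates_of_path hlθ (avoid_singleton hnel))
            obtain ⟨l', hl', hsub', -⟩ := path_prefix hl hel
            have hdl' : R'.seq (k'+1) ∉ l' := fun h => hld _ (hsub' _ h) rfl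
            have hel' : R.seq (kk+1) ∈ l' := mem_of_getLast?_eq hl'.2.2.2
            have hnc_de : ¬ critical rs (Function.update θ i ρ) (R'.seq (k'+1)) (R.seq (kk+1)) :=
              fun h => hdl' (h l' hl')
            have heI' : participates rs (Function.update θ i ρ) ∅ (R.seq (kk+1)) :=
              participates_of_path hl' (by simp)
            have hnc : ¬ critical rs (Function.update θ i ρ) (R.seq (kk+1)) (R'.seq (R'.m - 1)) := by
              intro hcrit_e
              obtain ⟨k'', hk''m, hk''e⟩ := (R'.hcrit (R.seq (kk+1))).mpr ⟨hcrit_e, heI'⟩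
              rcases lt_trichotomy k'' (k'+1) with h1 | h1 | h1
              · have hk''k' : k'' ≤ k' := by omega
                rcases eq_or_lt_of_le hk''k' with h2 | h2
                · exact he_ne (by rw [← hk''e, h2, hk'i])
                · have hc1 : critical rs (Function.update θ i ρ) (R.seq (kk+1)) i := by
                    have := R'.hord k'' k' h2 hk'm
                    rwa [hk''e, hk'i] at this
                  have hei : critical rs θ (R.seq (kk+1)) i := (critical_to_i_update hρ).mp hc1
                  exact not_critical_cycle he_crit hei (Ne.symm he_ne)
                    (participates_update_le hρ heI')
              · refine hdl' ?_
                rw [show R'.seq (k'+1) = R.seq (kk+1) by rw [← h1, hk''e]]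
                exact hel'
              · have := R'.hord (k'+1) k'' h1 hk''m
                rw [hk''e] at this
                exact hnc_de this
            obtain ⟨π, hπ, heπ⟩ := not_critical_iff.mp hnc
            have hj'e : participates rs θ {R.seq (kk+1)} (R'.seq (R'.m - 1)) :=
              participates_of_path (pathTo_update_le hρ hπ) (avoid_singleton heπ)
            have hb1 : welfare Q (θ (R'.seq (R'.m-1))) ≤ R.w (kk+1) :=
              (R.hw (kk+1) hkk1).2.1 _ hj'e
            have hj'ne : R'.seq (R'.m - 1) ≠ i := by
              intro h2
              have h3 := R'.hinj (R'.m - 1) (by have := R'.hm; omega) k' hk'm (h2.trans hk'i.symm)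
              have := R'.ht
              omega
            have hb2 : welfare Q (Function.update θ i ρ p) ≤
                welfare Q (Function.update θ i ρ (R'.seq (R'.m-1))) := R'.hj.2 p hppart'
            rw [welfare_update hj'ne, hwelp] at hb2
            exact hb2.trans hb1
        rcases lt_trichotomy kk R.t with h | h | h
        · rw [util_of_mid R (θ i) hpmf h hkkm hkki]
          have hwkk : cmax Q rs θ i (R.w kk) := by
            have := R.hw kk hkkm; rwa [hkki] at this
          have heqw : R'.w k' = R.w kk := cmax_unique hwk' hwkk
          have hlt : kk + 1 < R.m := by have := R.ht; omega
          linarith [hbound hlt]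
        · subst h
          rw [util_of_sel R (θ i) hpmf hkki]
          have hwkk : cmax Q rs θ i (R.w R.t) := by
            have := R.hw R.t hkkm; rwa [hkki] at this
          have heqw : R'.w k' = R.w R.t := cmax_unique hwk' hwkk
          by_cases h1m : R.t + 1 < R.m
          · have hV : welfare Q (θ i) = R.w (R.t+1) := by
              rw [← hkki]; exact R.hsel.1 h1m
            linarith [hbound h1m, hV]
          · have hjeq : R.seq (R.m - 1) = i := by
              rw [show R.m - 1 = R.t by have := R.ht; omega]
              exact hkki
            have h2 : welfare Q (θ p) ≤ welfare Q (θ i) := by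
              have := R.hj.2 p hppart; rwa [hjeq] at this
            linarith
        · exfalso
          have := no_late hρ R R' hkkm hkki hk'm hk'i h
          omega
      · push_neg at hiseq
        rw [util_of_not_mem R (θ i) hpmf hiseq]
        have h1 : welfare Q (θ p) ≤ welfare Q (θ (R.seq (R.m-1))) := R.hj.2 p hppart
        have h2 := hjmax_le _ hwk' hiseq hipart
        linarith
  · -- (b) : i performs under the misreport
    rw [util_of_sel R' (θ i) hpmf (hcase ▸ hk'i)]
    have hwt' : cmax Q rs θ i (R'.w R'.t) := by
      have := R'.hw R'.t R'.ht
      rw [show R'.seq R'.t = i from hcase ▸ hk'i] at this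
      exact cmax_update_i.mp this
    by_cases hiseq : ∃ kk, kk < R.m ∧ R.seq kk = i
    · obtain ⟨kk, hkkm, hkki⟩ := hiseq
      rcases lt_trichotomy kk R.t with h | h | h
      · rw [util_of_mid R (θ i) hpmf h hkkm hkki]
        have hwkk : cmax Q rs θ i (R.w kk) := by
          have := R.hw kk hkkm; rwa [hkki] at this
        have heq : R'.w R'.t = R.w kk := cmax_unique hwt' hwkk
        have hVle : welfare Q (θ i) ≤ R.w (kk+1) := by
          have hlt : kk + 1 < R.m := by have := R.ht; omega
          have hcr : critical rs θ i (R.seq (kk+1)) := by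
            have := R.hord kk (kk+1) (by omega) hlt
            rwa [hkki] at this
          have hne : R.seq (kk+1) ≠ i := by
            intro h2
            have := R.hinj (kk+1) hlt kk hkkm (h2.trans hkki.symm)
            omega
          exact (R.hw (kk+1) hlt).2.1 i (participates_avoid hcr hne hipart)
        linarith
      · rw [util_of_sel R (θ i) hpmf (h ▸ hkki)]
        have hwkk : cmax Q rs θ i (R.w R.t) := by
          have := R.hw R.t R.ht
          rwa [show R.seq R.t = i from h ▸ hkki] at this
        rw [cmax_unique hwt' hwkk]
      · exfalso
        have := no_late hρ R R' hkkm hkki hk'm hk'i h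
        omega
    · push_neg at hiseq
      rw [util_of_not_mem R (θ i) hpmf hiseq]
      have h1 := R.hj.2 i hipart
      have h2 := hjmax_le _ hwt' hiseq hipart
      linarith
  · -- (d) : i comes after the performer under the misreport
    rw [util_of_late R' (θ i) hpmf hcase hk'm hk'i]
    exact hRHS0
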